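/- arXiv:1712.04236 — 2 statements merged into one kernel-verified Lean document; each statement's English description precedes it below -/
import Mathlib

section
/- Let Ω = L ∪ R with L ∩ R = ∅, pairs(X) = min(|X ∩ L|, |X ∩ R|), and let f : {0,…,n} → ℝ be strictly increasing and concave (f(m) ≥ (f(m−1)+f(m+1))/2). Then the valuation v(X) = f(pairs(X)) satisfies the Ultra property. -/
def comp {α : Type*} [DecidableEq α] (v : Finset α → ℝ) (A : Finset α) (x y : α) : ℝ :=
  v (insert x (insert y A)) - v (insert x A) - v (insert y A) + v A

def UltraProp {α : Type*} [DecidableEq α] (v : Finset α → ℝ) : Prop :=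
  ∀ A : Finset α, ∀ x y z : α, x ∉ A → y ∉ A → z ∉ A →
    x ≠ y → x ≠ z → y ≠ z →
    comp v A x y > comp v A x z → comp v A y z = comp v A x y

lemma card_ins_mem {α : Type*} [DecidableEq α] {A S : Finset α} {x : α}
    (hx : x ∈ S) (hxA : x ∉ A) : ((insert x A) ∩ S).card = (A ∩ S).card + 1 := by
  rw [Finset.insert_inter_of_mem hx, Finset.card_insert_of_notMem (by simp [hxA])]

lemma card_ins_notMem {α : Type*} [DecidableEq α] {A S : Finset α} {x : α}
    (hx : x ∉ S) : ((insert x A) ∩ S).card = (A ∩ S).card := by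
  rw [Finset.insert_inter_of_notMem hx]

lemma comp_symm {α : Type*} [DecidableEq α] (v : Finset α → ℝ) (A : Finset α) (x y : α) :
    comp v A x y = comp v A y x := by
  unfold comp; rw [Finset.insert_comm]; ring

lemma comp_same {α : Type*} [DecidableEq α] (f : ℕ → ℝ) (S T A : Finset α) (x y : α)
    (hxS : x ∈ S) (hyS : y ∈ S) (hxT : x ∉ T) (hyT : y ∉ T)
    (hxA : x ∉ A) (hyA : y ∉ A) (hxy : x ≠ y) :
    comp (fun X => f (min (X ∩ S).card (X ∩ T).card)) A x y =
      f (min ((A ∩ S).card + 2) (A ∩ T).card)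
        - f (min ((A ∩ S).card + 1) (A ∩ T).card)
        - f (min ((A ∩ S).card + 1) (A ∩ T).card)
        + f (min (A ∩ S).card (A ∩ T).card) := by
  unfold comp
  dsimp only
  have hx' : x ∉ insert y A := by simp [hxA, hxy]
  simp only [card_ins_mem hxS hx', card_ins_mem hyS hyA, card_ins_mem hxS hxA,
    card_ins_notMem hxT, card_ins_notMem hyT]

lemma comp_cross {α : Type*} [DecidableEq α] (f : ℕ → ℝ) (S T A : Finset α) (x y : α)
    (hxS : x ∈ S) (hyT : y ∈ T) (hxT : x ∉ T) (hyS : y ∉ S)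
    (hxA : x ∉ A) (hyA : y ∉ A) :
    comp (fun X => f (min (X ∩ S).card (X ∩ T).card)) A x y =
      f (min ((A ∩ S).card + 1) ((A ∩ T).card + 1))
        - f (min ((A ∩ S).card + 1) (A ∩ T).card)
        - f (min (A ∩ S).card ((A ∩ T).card + 1))
        + f (min (A ∩ S).card (A ∩ T).card) := by
  unfold comp
  dsimp only
  have hxy : x ≠ y := fun h => hyS (h ▸ hxS)
  have hx' : x ∉ insert y A := by simp [hxA, hxy]
  simp only [card_ins_mem hxS hx', card_ins_mem hyT hyA, card_ins_mem hxS hxA,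
    card_ins_notMem hxT, card_ins_notMem hyS]

lemma cross_nonneg (f : ℕ → ℝ) (N a b : ℕ) (hab : a + b + 2 ≤ N)
    (hmono : ∀ m, m < N → f m < f (m + 1)) :
    0 ≤ f (min (a + 1) (b + 1)) - f (min (a + 1) b) - f (min a (b + 1)) + f (min a b) := by
  rcases lt_trichotomy a b with h | h | h
  · rw [min_eq_left (by omega), min_eq_left (by omega), min_eq_left (by omega),
      min_eq_left (by omega)]
    linarith
  · subst h
    rw [min_self, min_eq_right (by omega), min_eq_left (by omega), min_self]
    have := hmono a (by omega)
    linarith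
  · rw [min_eq_right (by omega), min_eq_right (by omega), min_eq_right (by omega),
      min_eq_right (by omega)]
    linarith

lemma same_nonpos (f : ℕ → ℝ) (N a b : ℕ) (hab : a + b + 2 ≤ N)
    (hmono : ∀ m, m < N → f m < f (m + 1))
    (hconc : ∀ m, m + 2 ≤ N → (f m + f (m + 2)) / 2 ≤ f (m + 1)) :
    f (min (a + 2) b) - f (min (a + 1) b) - f (min (a + 1) b) + f (min a b) ≤ 0 := by
  rcases lt_trichotomy (a + 1) b with h | h | h
  · rw [min_eq_left (by omega), min_eq_left (by omega), min_eq_left (by omega)]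
    have := hconc a (by omega)
    linarith
  · rw [min_eq_right (by omega), min_eq_left (by omega), min_eq_left (by omega)]
    have hb : b = a + 1 := by omega
    subst hb
    have := hmono a (by omega)
    linarith
  · rw [min_eq_right (by omega), min_eq_right (by omega), min_eq_right (by omega)]
    linarith

/-- The left-right shoes valuation `v(X) = f(min(|X ∩ L|, |X ∩ R|))`, with `f`
strictly increasing and concave on `{0,…,n}`, satisfies the Ultra property. -/
theorem leftRight_ultra {α : Type*} [Fintype α] [DecidableEq α]
    (L R : Finset α) (hLR : L ∪ R = Finset.univ) (hdisj : Disjoint L R)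
    (f : ℕ → ℝ)
    (hmono : ∀ m, m < Fintype.card α → f m < f (m + 1))
    (hconc : ∀ m, m + 2 ≤ Fintype.card α → (f m + f (m + 2)) / 2 ≤ f (m + 1)) :
    UltraProp (fun X => f (min (X ∩ L).card (X ∩ R).card)) := by
  intro A x y z hxA hyA hzA hxy hxz hyz hgt
  set v : Finset α → ℝ := fun X => f (min (X ∩ L).card (X ∩ R).card) with hv
  have hvR : v = fun X => f (min (X ∩ R).card (X ∩ L).card) := by
    funext X; rw [hv]; simp [min_comm]
  have side : ∀ u : α, (u ∈ L ∧ u ∉ R) ∨ (u ∈ R ∧ u ∉ L) := by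
    intro u
    have hu : u ∈ L ∪ R := hLR ▸ Finset.mem_univ u
    rcases Finset.mem_union.mp hu with h | h
    · exact Or.inl ⟨h, fun h' => (Finset.disjoint_left.mp hdisj h h')⟩
    · exact Or.inr ⟨h, fun h' => (Finset.disjoint_left.mp hdisj h' h)⟩
  set a := (A ∩ L).card with ha
  set b := (A ∩ R).card with hb
  have hcard : a + b + 2 ≤ Fintype.card α := by
    have h1 : (A ∩ L) ∪ (A ∩ R) = A := by
      rw [← Finset.inter_union_distrib_left, hLR, Finset.inter_univ]
    have h2 : Disjoint (A ∩ L) (A ∩ R) :=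
      hdisj.mono (Finset.inter_subset_right) (Finset.inter_subset_right)
    have hab : a + b = A.card := by
      rw [ha, hb, ← Finset.card_union_of_disjoint h2, h1]
    have h3 : (insert x (insert y A)).card ≤ Fintype.card α := Finset.card_le_univ _
    rw [Finset.card_insert_of_notMem (by simp [hxA, hxy]),
      Finset.card_insert_of_notMem hyA] at h3
    omega
  set E : ℝ := f (min (a+1) (b+1)) - f (min (a+1) b) - f (min a (b+1)) + f (min a b) with hE
  set SL : ℝ := f (min (a+2) b) - f (min (a+1) b) - f (min (a+1) b) + f (min a b) with hSL
  set SR : ℝ := f (min (b+2) a) - f (min (b+1) a) - f (min (b+1) a) + f (min b a) with hSR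
  have hcross0 : (0:ℝ) ≤ E := cross_nonneg f _ a b hcard hmono
  have hsameL : SL ≤ 0 := same_nonpos f _ a b hcard hmono hconc
  have hsameR : SR ≤ 0 := same_nonpos f _ b a (by omega) hmono hconc
  have HsameL : ∀ u w : α, u ∈ L → w ∈ L → u ∉ R → w ∉ R → u ∉ A → w ∉ A → u ≠ w →
      comp v A u w = SL := by
    intro u w h1 h2 h3 h4 h5 h6 h7
    have := comp_same f L R A u w h1 h2 h3 h4 h5 h6 h7
    rw [hv, hSL]; exact this
  have HsameR : ∀ u w : α, u ∈ R → w ∈ R → u ∉ L → w ∉ L → u ∉ A → w ∉ A → u ≠ w →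
      comp v A u w = SR := by
    intro u w h1 h2 h3 h4 h5 h6 h7
    have := comp_same f R L A u w h1 h2 h3 h4 h5 h6 h7
    rw [hvR, hSR]; exact this
  have Hcross : ∀ u w : α, u ∈ L → w ∈ R → u ∉ R → w ∉ L → u ∉ A → w ∉ A →
      comp v A u w = E := by
    intro u w h1 h2 h3 h4 h5 h6
    have := comp_cross f L R A u w h1 h2 h3 h4 h5 h6
    rw [hv, hE]; exact this
  have Hcross' : ∀ u w : α, u ∈ R → w ∈ L → u ∉ L → w ∉ R → u ∉ A → w ∉ A →
      comp v A u w = E := by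
    intro u w h1 h2 h3 h4 h5 h6
    rw [comp_symm]
    exact Hcross w u h2 h1 h4 h3 h6 h5
  rcases side x with ⟨hx1, hx2⟩ | ⟨hx1, hx2⟩ <;>
    rcases side y with ⟨hy1, hy2⟩ | ⟨hy1, hy2⟩ <;>
    rcases side z with ⟨hz1, hz2⟩ | ⟨hz1, hz2⟩
  · -- L L L
    rw [HsameL x y hx1 hy1 hx2 hy2 hxA hyA hxy,
      HsameL x z hx1 hz1 hx2 hz2 hxA hzA hxz] at hgt
    exact absurd hgt (lt_irrefl _)
  · -- L L R
    rw [HsameL x y hx1 hy1 hx2 hy2 hxA hyA hxy,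
      Hcross x z hx1 hz1 hx2 hz2 hxA hzA] at hgt
    linarith
  · -- L R L
    rw [Hcross x y hx1 hy1 hx2 hy2 hxA hyA,
      Hcross' y z hy1 hz1 hy2 hz2 hyA hzA]
  · -- L R R
    rw [Hcross x y hx1 hy1 hx2 hy2 hxA hyA,
      Hcross x z hx1 hz1 hx2 hz2 hxA hzA] at hgt
    exact absurd hgt (lt_irrefl _)
  · -- R L L
    rw [Hcross' x y hx1 hy1 hx2 hy2 hxA hyA,
      Hcross' x z hx1 hz1 hx2 hz2 hxA hzA] at hgt
    exact absurd hgt (lt_irrefl _)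
  · -- R L R
    rw [Hcross' x y hx1 hy1 hx2 hy2 hxA hyA,
      Hcross y z hy1 hz1 hy2 hz2 hyA hzA]
  · -- R R L
    rw [HsameR x y hx1 hy1 hx2 hy2 hxA hyA hxy,
      Hcross' x z hx1 hz1 hx2 hz2 hxA hzA] at hgt
    linarith
  · -- R R R
    rw [HsameR x y hx1 hy1 hx2 hy2 hxA hyA hxy,
      HsameR x z hx1 hz1 hx2 hz2 hxA hzA hxz] at hgt
    exact absurd hgt (lt_irrefl _)
end

section
/- If v satisfies Ultra and A ⊆ Ω is nonempty with x ∈ Ω \ A, then there is y ∈ A such that v({x}) + v(A) ≤ v({y}) + v((A \ {y}) ∪ {x}). -/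
lemma comp_comm {α : Type*} [DecidableEq α] (v : Finset α → ℝ) (C : Finset α) (a b : α) :
    comp v C a b = comp v C b a := by
  unfold comp
  rw [Finset.insert_comm]
  ring

lemma sub_eq_sub_insert_add_comp_sub_comp {α : Type*} [DecidableEq α] (v : Finset α → ℝ)
    (C : Finset α) (x y b : α) :
    v (insert x C) - v (insert y C) =
      v (insert x (insert b C)) - v (insert y (insert b C)) + (comp v C y b - comp v C x b) := by
  unfold comp
  rw [Finset.insert_comm x b, Finset.insert_comm y b]
  ring

namespace UltraProp

variable {α : Type*} [DecidableEq α] {v : Finset α → ℝ}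

lemma comp_le_of_comp_le (hv : UltraProp v) {C : Finset α} {x y b : α}
    (hx : x ∉ C) (hy : y ∉ C) (hb : b ∉ C) (hxy : x ≠ y) (hxb : x ≠ b) (hyb : y ≠ b)
    (h : comp v C x y ≤ comp v C x b) : comp v C y b ≤ comp v C x b := by
  by_contra! hlt
  have hgt : comp v C b y > comp v C b x := by
    rwa [comp_comm v C b y, comp_comm v C b x]
  have hyx : comp v C y x = comp v C b y := hv C b y x hb hy hx hyb.symm hxb.symm hxy.symm hgt
  rw [comp_comm v C y x, comp_comm v C b y] at hyx
  linarith

lemma exists_exchange_le (hv : UltraProp v) {x : α} {R C : Finset α} (hR : R.Nonempty)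
    (hRC : Disjoint R C) (hxC : x ∉ C) (hxR : x ∉ R) :
    ∃ y ∈ R, v (insert x C) - v (insert y C) ≤ v (insert x (C ∪ R.erase y)) - v (C ∪ R) := by
  induction R using Finset.strongInduction generalizing C with
  | H R ih =>
  obtain ⟨b, hbR, hbmax⟩ := Finset.exists_max_image R (comp v C x) hR
  have hbC : b ∉ C := Finset.disjoint_left.mp hRC hbR
  rcases (R.erase b).eq_empty_or_nonempty with hRb | hRb
  · obtain rfl : R = {b} := ((Finset.erase_eq_empty_iff R b).mp hRb).resolve_left hR.ne_empty
    refine ⟨b, Finset.mem_singleton_self b, ?_⟩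
    simp [Finset.union_comm C]
  obtain ⟨y, hyRb, hy⟩ := ih (R.erase b) (Finset.erase_ssubset hbR) (C := insert b C) hRb
    (Finset.disjoint_insert_right.mpr
      ⟨Finset.notMem_erase b R, Finset.disjoint_of_subset_left (R.erase_subset b) hRC⟩)
    (by rw [Finset.mem_insert, not_or]; exact ⟨fun h => hxR (h ▸ hbR), hxC⟩)
    (fun h => hxR (Finset.mem_of_mem_erase h))
  obtain ⟨hyb, hyR⟩ := Finset.mem_erase.mp hyRb
  have hbRy : b ∈ R.erase y := Finset.mem_erase.mpr ⟨Ne.symm hyb, hbR⟩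
  have hunion : insert b C ∪ R.erase b = C ∪ R := by
    rw [Finset.insert_union, ← Finset.union_insert, Finset.insert_erase hbR]
  have hunion_erase : insert b C ∪ (R.erase b).erase y = C ∪ R.erase y := by
    rw [Finset.erase_right_comm, Finset.insert_union, ← Finset.union_insert,
      Finset.insert_erase hbRy]
  rw [hunion, hunion_erase] at hy
  have hcomp : comp v C y b ≤ comp v C x b :=
    hv.comp_le_of_comp_le hxC (Finset.disjoint_left.mp hRC hyR) hbC
      (fun h => hxR (h ▸ hyR)) (fun h => hxR (h ▸ hbR)) hyb (hbmax y hyR)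
  refine ⟨y, hyR, ?_⟩
  rw [sub_eq_sub_insert_add_comp_sub_comp v C x y b]
  linarith

end UltraProp

theorem ultra_one_exchange {α : Type*} [DecidableEq α]
    (v : Finset α → ℝ) (hv : UltraProp v)
    (A : Finset α) (hA : A.Nonempty) (x : α) (hx : x ∉ A) :
    ∃ y ∈ A, v {x} + v A ≤ v {y} + v (insert x (A.erase y)) := by
  obtain ⟨y, hyA, hy⟩ :=
    hv.exists_exchange_le (C := ∅) hA (Finset.disjoint_empty_right A) (Finset.notMem_empty x) hx
  refine ⟨y, hyA, ?_⟩
  simp only [Finset.empty_union, LawfulSingleton.insert_empty_eq] at hy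
  linarith
end
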